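/- arXiv:1306.6064 — 2 statements merged into one kernel-verified Lean document; each statement's English description precedes it below -/
import Mathlib

section
/- Let q be a real number with 0 < q < 1, and let 𝒟 = {z ∈ ℂ : −1 < Re(z) < 1}. Then the map η : 𝒟 → ℓ²(ℕ; ℂ) defined by η(z) = (p_n(z))_{n ∈ ℕ} is well defined and holomorphic (complex differentiable at every point of 𝒟 as a map into the Banach space ℓ²(ℕ; ℂ)). -/
/-- The q-Pochhammer symbol `(x; q)_k = ∏_{j=0}^{k-1} (1 - x q^j)`. -/
noncomputable def qPoch (x q : ℝ) (k : ℕ) : ℝ := ∏ j ∈ Finset.range k, (1 - x * q ^ j)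

/-- The q-binomial coefficient `[n, k]_q = (q; q)_n / ((q; q)_k (q; q)_{n-k})`. -/
noncomputable def qbinom (q : ℝ) (n k : ℕ) : ℝ :=
  qPoch q q n / (qPoch q q k * qPoch q q (n - k))

/-- `q^z = exp(z · log q)` for a real `q > 0` and complex `z`. -/
noncomputable def cpw (q : ℝ) (z : ℂ) : ℂ := Complex.exp (z * (Real.log q : ℂ))

/-- `p_n(z) = (q^n / √((q²; q²)_n)) · Σ_{k=0}^{n} [n, k]_{q²} · q^{z(n-2k)}`. -/
noncomputable def pfun (q : ℝ) (n : ℕ) (z : ℂ) : ℂ :=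
  ((q ^ n / Real.sqrt (qPoch (q ^ 2) (q ^ 2) n) : ℝ) : ℂ) *
    ∑ k ∈ Finset.range (n + 1),
      (qbinom (q ^ 2) n k : ℂ) * cpw q (z * ((n : ℂ) - 2 * (k : ℂ)))


/-!
The Pochhammer symbols `(q²; q²)_n` are bounded below by a positive constant uniformly in `n`
(compare with `(q²; q²)_∞`), so the `q²`-binomial coefficients are uniformly bounded, and
`|q^{z(n - 2k)}| ≤ q^{-r n}` when `|Re z| ≤ r`. Hence `|p_n(z)| ≤ C (n + 1) q^{(1 - r) n}` on every
strip `|Re z| ≤ r < 1`: the series `∑ p_n(z) eₙ` converges absolutely in `ℓ²`, uniformly on these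
strips, and its sum is holomorphic by the Weierstrass M-test.
-/

lemma Real.exp_neg_div_le_one_sub {y t : ℝ} (hy : 0 ≤ y) (hyt : y ≤ t) (ht : t < 1) :
    Real.exp (-(y / (1 - t))) ≤ 1 - y := by
  have ht' : 0 < 1 - t := by linarith
  have hx : 0 ≤ y / (1 - t) := by positivity
  have hyx : y ≤ y / (1 - t) * (1 - y) := by
    rw [div_mul_eq_mul_div, le_div_iff₀ ht']
    nlinarith
  rw [Real.exp_neg, inv_le_comm₀ (Real.exp_pos _) (by linarith)]
  calc (1 - y)⁻¹ ≤ y / (1 - t) + 1 := by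
        rw [inv_le_iff_one_le_mul₀ (by linarith)]
        nlinarith
    _ ≤ Real.exp (y / (1 - t)) := Real.add_one_le_exp _

lemma qPoch_self_le_one {t : ℝ} (ht0 : 0 ≤ t) (ht1 : t ≤ 1) (n : ℕ) : qPoch t t n ≤ 1 :=
  Finset.prod_le_one
    (fun j _ => sub_nonneg.2 (mul_le_one₀ ht1 (pow_nonneg ht0 j) (pow_le_one₀ ht0 ht1)))
    (fun j _ => sub_le_self _ (mul_nonneg ht0 (pow_nonneg ht0 j)))

lemma exp_neg_le_qPoch_self {t : ℝ} (ht0 : 0 ≤ t) (ht1 : t < 1) (n : ℕ) :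
    Real.exp (-(1 / (1 - t) ^ 2)) ≤ qPoch t t n := by
  have ht' : 0 < 1 - t := by linarith
  have hfactor : ∀ j, t * t ^ j ≤ t := fun j =>
    mul_le_of_le_one_right ht0 (pow_le_one₀ ht0 ht1.le)
  have hsum : ∑ j ∈ Finset.range n, t * t ^ j / (1 - t) ≤ 1 / (1 - t) ^ 2 := by
    rw [← Finset.sum_div, ← Finset.mul_sum, Finset.range_eq_Ico, pow_two, ← div_div,
      div_le_div_iff_of_pos_right ht']
    calc t * ∑ j ∈ Finset.Ico 0 n, t ^ j ≤ 1 * (t ^ 0 / (1 - t)) :=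
          mul_le_mul ht1.le (geom_sum_Ico_le_of_lt_one ht0 ht1)
            (Finset.sum_nonneg fun j _ => pow_nonneg ht0 j) zero_le_one
      _ = 1 / (1 - t) := by simp
  calc Real.exp (-(1 / (1 - t) ^ 2))
      ≤ Real.exp (∑ j ∈ Finset.range n, -(t * t ^ j / (1 - t))) := by
        rw [Finset.sum_neg_distrib]
        exact Real.exp_le_exp.2 (neg_le_neg hsum)
    _ = ∏ j ∈ Finset.range n, Real.exp (-(t * t ^ j / (1 - t))) := Real.exp_sum _ _
    _ ≤ qPoch t t n :=
        Finset.prod_le_prod (fun j _ => (Real.exp_pos _).le) fun j _ =>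
          Real.exp_neg_div_le_one_sub (mul_nonneg ht0 (pow_nonneg ht0 j)) (hfactor j) ht1

lemma qbinom_le_exp {t : ℝ} (ht0 : 0 ≤ t) (ht1 : t < 1) (n k : ℕ) :
    qbinom t n k ≤ Real.exp (2 * (1 / (1 - t) ^ 2)) := by
  set c := Real.exp (-(1 / (1 - t) ^ 2))
  have hc : 0 < c := Real.exp_pos _
  have hk := exp_neg_le_qPoch_self ht0 ht1 k
  have hnk := exp_neg_le_qPoch_self ht0 ht1 (n - k)
  have hden : c * c ≤ qPoch t t k * qPoch t t (n - k) :=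
    mul_le_mul hk hnk hc.le (hc.le.trans hk)
  calc qbinom t n k ≤ 1 / (c * c) :=
        div_le_div₀ zero_le_one (qPoch_self_le_one ht0 ht1.le n) (by positivity) hden
    _ = Real.exp (2 * (1 / (1 - t) ^ 2)) := by
        rw [← Real.exp_add, one_div, ← Real.exp_neg]; ring_nf

lemma qbinom_nonneg {t : ℝ} (ht0 : 0 ≤ t) (ht1 : t < 1) (n k : ℕ) : 0 ≤ qbinom t n k := by
  have h m := (Real.exp_pos _).le.trans (exp_neg_le_qPoch_self ht0 ht1 m)
  exact div_nonneg (h n) (mul_nonneg (h k) (h (n - k)))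

lemma norm_cpw (q : ℝ) (z : ℂ) : ‖cpw q z‖ = Real.exp (z.re * Real.log q) := by
  rw [cpw, Complex.norm_exp, Complex.mul_re, Complex.ofReal_re, Complex.ofReal_im, mul_zero,
    sub_zero]

lemma norm_cpw_mul_sub_le {q r : ℝ} (hq0 : 0 < q) (hq1 : q < 1) {z : ℂ} (hz : |z.re| ≤ r)
    {n k : ℕ} (hk : k ≤ n) :
    ‖cpw q (z * ((n : ℂ) - 2 * (k : ℂ)))‖ ≤ Real.exp (r * n * -Real.log q) := by
  have hlog : 0 ≤ -Real.log q := neg_nonneg.2 (Real.log_nonpos hq0.le hq1.le)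
  have hd : |(n : ℝ) - 2 * k| ≤ n := by
    rw [abs_le]
    constructor <;> linarith [(Nat.cast_le (α := ℝ)).2 hk, (Nat.cast_nonneg (α := ℝ) k)]
  rw [norm_cpw, Real.exp_le_exp]
  have hre : (z * ((n : ℂ) - 2 * (k : ℂ))).re = z.re * ((n : ℝ) - 2 * k) := by
    simp [Complex.mul_re]
  calc (z * ((n : ℂ) - 2 * (k : ℂ))).re * Real.log q
      = -(z.re * ((n : ℝ) - 2 * k)) * -Real.log q := by rw [hre]; ring
    _ ≤ |z.re * ((n : ℝ) - 2 * k)| * -Real.log q :=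
        mul_le_mul_of_nonneg_right (neg_le_abs _) hlog
    _ ≤ r * n * -Real.log q := by
        rw [abs_mul]
        exact mul_le_mul_of_nonneg_right (mul_le_mul hz hd (abs_nonneg _) ((abs_nonneg _).trans hz))
          hlog

lemma exists_norm_pfun_le {q : ℝ} (hq0 : 0 < q) (hq1 : q < 1) :
    ∃ C, ∀ (r : ℝ) (n : ℕ) (z : ℂ), |z.re| ≤ r →
      ‖pfun q n z‖ ≤ C * ((n + 1) * Real.exp ((1 - r) * Real.log q) ^ n) := by
  have ht0 : 0 ≤ q ^ 2 := sq_nonneg q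
  have ht1 : q ^ 2 < 1 := pow_lt_one₀ hq0.le hq1 two_ne_zero
  set a := 1 / (1 - q ^ 2) ^ 2
  refine ⟨Real.exp (a / 2) * Real.exp (2 * a), fun r n z hz => ?_⟩
  have hcoef : ‖((q ^ n / Real.sqrt (qPoch (q ^ 2) (q ^ 2) n) : ℝ) : ℂ)‖ ≤
      q ^ n * Real.exp (a / 2) := by
    rw [Complex.norm_real, Real.norm_of_nonneg (by positivity), div_eq_mul_inv,
      Real.exp_half, ← Real.sqrt_inv]
    gcongr
    rw [inv_le_comm₀ (lt_of_lt_of_le (Real.exp_pos _) (exp_neg_le_qPoch_self ht0 ht1 n))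
      (Real.exp_pos _), ← Real.exp_neg]
    exact exp_neg_le_qPoch_self ht0 ht1 n
  have hsum : ‖∑ k ∈ Finset.range (n + 1),
        (qbinom (q ^ 2) n k : ℂ) * cpw q (z * ((n : ℂ) - 2 * (k : ℂ)))‖ ≤
      (n + 1) * (Real.exp (2 * a) * Real.exp (r * n * -Real.log q)) := by
    refine (norm_sum_le _ _).trans ?_
    calc _ ≤ ∑ _k ∈ Finset.range (n + 1), Real.exp (2 * a) * Real.exp (r * n * -Real.log q) :=
          Finset.sum_le_sum fun k hk => ?_
      _ = _ := by simp
    rw [norm_mul, Complex.norm_real, Real.norm_of_nonneg (qbinom_nonneg ht0 ht1 n k)]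
    exact mul_le_mul (qbinom_le_exp ht0 ht1 n k)
      (norm_cpw_mul_sub_le hq0 hq1 hz (Nat.lt_succ_iff.1 (Finset.mem_range.1 hk)))
      (norm_nonneg _) (Real.exp_pos _).le
  have hpow : q ^ n * Real.exp (r * n * -Real.log q) = Real.exp ((1 - r) * Real.log q) ^ n := by
    rw [← Real.exp_nat_mul, ← Real.exp_log (pow_pos hq0 n), Real.log_pow, ← Real.exp_add]
    ring_nf
  calc ‖pfun q n z‖ ≤ q ^ n * Real.exp (a / 2) *
        ((n + 1) * (Real.exp (2 * a) * Real.exp (r * n * -Real.log q))) := by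
        rw [pfun, norm_mul]
        exact mul_le_mul hcoef hsum (norm_nonneg _) (by positivity)
    _ = Real.exp (a / 2) * Real.exp (2 * a) * ((n + 1) * Real.exp ((1 - r) * Real.log q) ^ n) := by
        rw [← hpow]; ring

lemma differentiable_pfun (q : ℝ) (n : ℕ) : Differentiable ℂ (pfun q n) := by
  unfold pfun cpw
  fun_prop

lemma summable_add_one_mul_pow {ρ : ℝ} (h0 : 0 ≤ ρ) (h1 : ρ < 1) :
    Summable fun n : ℕ => ((n : ℝ) + 1) * ρ ^ n := by
  have hρ : ‖ρ‖ < 1 := by rwa [Real.norm_of_nonneg h0]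
  simpa [add_mul] using
    (summable_pow_mul_geometric_of_norm_lt_one 1 hρ).add (summable_geometric_of_lt_one h0 h1)

section lp

variable {ι : Type*} {E : ι → Type*} [∀ i, NormedAddCommGroup (E i)]

lemma memℓp_of_norm_le_of_summable {u : ι → ℝ} (hu : Summable u) {f : ∀ i, E i}
    (hf : ∀ i, ‖f i‖ ≤ u i) {p : ENNReal} (hp : 1 ≤ p) : Memℓp f p := by
  refine Memℓp.of_exponent_ge (memℓp_gen ?_) hp
  simpa using hu.of_nonneg_of_le (fun i => norm_nonneg _) hf

variable [∀ i, NormedSpace ℂ (E i)] [∀ i, CompleteSpace (E i)] [DecidableEq ι]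
  {p : ENNReal} [Fact (1 ≤ p)]

lemma differentiableOn_tsum_lp_single {U : Set ℂ} (hU : IsOpen U) {F : ∀ i, ℂ → E i}
    (hF : ∀ i, DifferentiableOn ℂ (F i) U) {u : ι → ℝ} (hu : Summable u)
    (hFu : ∀ i, ∀ z ∈ U, ‖F i z‖ ≤ u i) :
    DifferentiableOn ℂ (fun z => ∑' i, lp.single p i (F i z)) U := by
  have hp : 0 < p := zero_lt_one.trans_le Fact.out
  refine Complex.differentiableOn_tsum_of_summable_norm hu (fun i => ?_) hU fun i z hz => ?_
  · exact (lp.singleContinuousLinearMap ℂ E p i).differentiable.comp_differentiableOn (hF i)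
  · rw [lp.norm_single hp]
    exact hFu i z hz

end lp

theorem stmt9 (q : ℝ) (hq0 : 0 < q) (hq1 : q < 1) :
    (∀ z : ℂ, -1 < z.re → z.re < 1 → Memℓp (fun n : ℕ => pfun q n z) 2) ∧
    ∃ η : ℂ → lp (fun _ : ℕ => ℂ) 2,
      (∀ z : ℂ, -1 < z.re → z.re < 1 → ∀ n : ℕ, (η z : ∀ _ : ℕ, ℂ) n = pfun q n z) ∧
      (∀ z : ℂ, -1 < z.re → z.re < 1 → DifferentiableAt ℂ η z) := by
  obtain ⟨C, hC⟩ := exists_norm_pfun_le hq0 hq1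
  have hmajorant : ∀ r < 1,
      Summable fun n : ℕ => C * ((n + 1) * Real.exp ((1 - r) * Real.log q) ^ n) := fun r hr =>
    (summable_add_one_mul_pow (Real.exp_nonneg _) (Real.exp_lt_one_iff.2
      (mul_neg_of_pos_of_neg (by linarith) (Real.log_neg hq0 hq1)))).mul_left C
  have hmem (z : ℂ) (h1 : -1 < z.re) (h2 : z.re < 1) : Memℓp (fun n => pfun q n z) 2 :=
    memℓp_of_norm_le_of_summable (hmajorant |z.re| (abs_lt.2 ⟨h1, h2⟩)) (fun n => hC _ n z le_rfl)
      one_le_two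
  refine ⟨hmem, fun z => ∑' n, lp.single 2 n (pfun q n z), fun z h1 h2 n => ?_, fun z h1 h2 => ?_⟩
  · have hsum := lp.hasSum_single ENNReal.ofNat_ne_top
      (⟨_, hmem z h1 h2⟩ : lp (fun _ : ℕ => ℂ) 2)
    exact congrFun (congrArg (fun f : lp (fun _ : ℕ => ℂ) 2 => (f : ∀ _ : ℕ, ℂ)) hsum.tsum_eq) n
  · have hzr : |z.re| < 1 := abs_lt.2 ⟨h1, h2⟩
    have hU : IsOpen {w : ℂ | |w.re| < (|z.re| + 1) / 2} :=
      isOpen_lt Complex.continuous_re.abs continuous_const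
    refine (differentiableOn_tsum_lp_single hU (fun n => (differentiable_pfun q n).differentiableOn)
      (hmajorant _ (by linarith)) fun n w hw => hC _ n w hw.le).differentiableAt
      (hU.mem_nhds (show |z.re| < (|z.re| + 1) / 2 by linarith))
end

section
/- Let q be a real number with 0 < q < 1 and let z ∈ ℂ with −1 < Re(z) < 1. Let η_z ∈ ℓ²(ℕ; ℂ) be the vector with coordinates (p_n(z))_{n ∈ ℕ}, and let a be the bounded operator on ℓ²(ℕ; ℂ) defined by (a ξ)(n) = √(1 − q^{2(n+1)}) ξ(n+1), with adjoint a*. Then η_z is an eigenvector of q^{−1} a + q a* with eigenvalue q^z + q^{−z}: (q^{−1} a + q a*) η_z = (q^z + q^{−z}) η_z. -/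
/-!
With `w = q^z` and `c_n = q^n / √((q²; q²)_n)` one has `p_n(z) = c_n w^n H_n(w⁻²)`, where
`H_n(x) = Σ_k [n, k]_{q²} x^k` is the Rogers–Szegő polynomial. The q-Pascal rule gives the
three-term recurrence `H_{n+1}(x) = (1 + x) H_n(x) - (1 - q^{2n}) x H_{n-1}(x)`, and since
`c_{n+1} √(1 - q^{2(n+1)}) = q c_n` it becomes
`q⁻¹ √(1 - q^{2(n+1)}) p_{n+1} + q √(1 - q^{2n}) p_{n-1} = (w + w⁻¹) p_n`.
The operator `a` is a weighted shift, `a*` the adjoint weighted shift, so this recurrence is exactly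
the eigenvalue equation, coordinate by coordinate.

For square summability, `(q²; q²)_n ≥ (q²; q²)_∞ > 0` bounds the q-binomials uniformly, and
`|q^n q^{z(n-2k)}| ≤ q^{n(1 - |Re z|)}`, so `|p_n(z)| ≤ C (n + 1) q^{n(1 - |Re z|)}`.
-/

open Finset

lemma qPoch_zero (x q : ℝ) : qPoch x q 0 = 1 :=
  prod_range_zero _

lemma qPoch_succ (x q : ℝ) (k : ℕ) : qPoch x q (k + 1) = qPoch x q k * (1 - x * q ^ k) :=
  prod_range_succ _ _

section QPochhammer

variable {Q : ℝ}

lemma mul_pow_lt_one (h0 : 0 ≤ Q) (h1 : Q < 1) (j : ℕ) : Q * Q ^ j < 1 := by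
  rw [← pow_succ']
  exact pow_lt_one₀ h0 h1 j.succ_ne_zero

lemma qPoch_pos (h0 : 0 ≤ Q) (h1 : Q < 1) (k : ℕ) : 0 < qPoch Q Q k :=
  prod_pos fun j _ => sub_pos.2 (mul_pow_lt_one h0 h1 j)

lemma qPoch_le_one (h0 : 0 ≤ Q) (h1 : Q < 1) (k : ℕ) : qPoch Q Q k ≤ 1 :=
  prod_le_one (fun j _ => (sub_pos.2 (mul_pow_lt_one h0 h1 j)).le) fun j _ =>
    sub_le_self _ (by positivity)

lemma exp_neg_div_le_one_sub {t : ℝ} (ht0 : 0 ≤ t) (htQ : t ≤ Q) (h1 : Q < 1) :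
    Real.exp (-(t / (1 - Q))) ≤ 1 - t := by
  have ht1 : 0 < 1 - t := by linarith
  have hQ : 0 < 1 - Q := by linarith
  calc Real.exp (-(t / (1 - Q))) ≤ Real.exp (1 - (1 - t)⁻¹) := by
        rw [show 1 - (1 - t)⁻¹ = -(t / (1 - t)) by field_simp; ring]
        gcongr
    _ ≤ Real.exp (Real.log (1 - t)) := Real.exp_le_exp.2 (Real.one_sub_inv_le_log_of_pos ht1)
    _ = 1 - t := Real.exp_log ht1

lemma exists_pos_le_qPoch (h0 : 0 ≤ Q) (h1 : Q < 1) : ∃ P > 0, ∀ k, P ≤ qPoch Q Q k := by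
  refine ⟨Real.exp (-(Q / (1 - Q) ^ 2)), Real.exp_pos _, fun k => ?_⟩
  have hgeom : ∑ j ∈ range k, Q * Q ^ j / (1 - Q) ≤ Q / (1 - Q) ^ 2 := by
    have hQ : 0 < 1 - Q := by linarith
    have hsum : ∑ j ∈ range k, Q ^ j ≤ 1 / (1 - Q) := by
      have := geom_sum_Ico_le_of_lt_one h0 h1 (m := 0) (n := k)
      rwa [← range_eq_Ico, pow_zero] at this
    calc ∑ j ∈ range k, Q * Q ^ j / (1 - Q) = Q / (1 - Q) * ∑ j ∈ range k, Q ^ j := by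
          rw [mul_sum]; exact sum_congr rfl fun j _ => by ring
      _ ≤ Q / (1 - Q) * (1 / (1 - Q)) := by gcongr
      _ = Q / (1 - Q) ^ 2 := by field_simp
  calc Real.exp (-(Q / (1 - Q) ^ 2)) ≤ Real.exp (∑ j ∈ range k, -(Q * Q ^ j / (1 - Q))) := by
        rw [sum_neg_distrib]
        gcongr
    _ = ∏ j ∈ range k, Real.exp (-(Q * Q ^ j / (1 - Q))) := Real.exp_sum _ _
    _ ≤ qPoch Q Q k :=
        prod_le_prod (fun _ _ => (Real.exp_pos _).le) fun j _ =>
          exp_neg_div_le_one_sub (by positivity)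
            (mul_le_of_le_one_right h0 (pow_le_one₀ h0 h1.le)) h1

lemma qbinom_zero_right (h0 : 0 ≤ Q) (h1 : Q < 1) (n : ℕ) : qbinom Q n 0 = 1 := by
  rw [qbinom, Nat.sub_zero, qPoch_zero, one_mul, div_self (qPoch_pos h0 h1 n).ne']

lemma qbinom_self (h0 : 0 ≤ Q) (h1 : Q < 1) (n : ℕ) : qbinom Q n n = 1 := by
  rw [qbinom, Nat.sub_self, qPoch_zero, mul_one, div_self (qPoch_pos h0 h1 n).ne']

lemma qbinom_nonneg_s11 (h0 : 0 ≤ Q) (h1 : Q < 1) (n k : ℕ) : 0 ≤ qbinom Q n k := by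
  have := qPoch_pos h0 h1
  exact div_nonneg (this n).le (mul_pos (this k) (this (n - k))).le

lemma qbinom_le (h0 : 0 ≤ Q) (h1 : Q < 1) {P : ℝ} (hP0 : 0 < P) (hP : ∀ k, P ≤ qPoch Q Q k)
    (n k : ℕ) : qbinom Q n k ≤ (P ^ 2)⁻¹ := by
  rw [qbinom, ← one_div, sq]
  exact div_le_div₀ zero_le_one (qPoch_le_one h0 h1 n) (mul_pos hP0 hP0)
    (mul_le_mul (hP k) (hP (n - k)) hP0.le (qPoch_pos h0 h1 k).le)

lemma qbinom_add_two_succ (h0 : 0 ≤ Q) (h1 : Q < 1) {n k : ℕ} (hk : k ≤ n) :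
    qbinom Q (n + 2) (k + 1) =
      qbinom Q (n + 1) (k + 1) + qbinom Q (n + 1) k - (1 - Q ^ (n + 1)) * qbinom Q n k := by
  obtain ⟨d, rfl⟩ := Nat.exists_eq_add_of_le hk
  simp only [qbinom, show k + d + 2 - (k + 1) = d + 1 by omega,
    show k + d + 1 - (k + 1) = d by omega, show k + d + 1 - k = d + 1 by omega,
    Nat.add_sub_cancel_left, show k + d + 2 = k + d + 1 + 1 by omega, qPoch_succ]
  have := qPoch_pos h0 h1
  have := sub_pos.2 (mul_pow_lt_one h0 h1 k)
  have := sub_pos.2 (mul_pow_lt_one h0 h1 d)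
  have := sub_pos.2 (mul_pow_lt_one h0 h1 (k + d))
  have := sub_pos.2 (mul_pow_lt_one h0 h1 (k + d + 1))
  field_simp
  ring

end QPochhammer

noncomputable def rogersSzego (Q : ℝ) (n : ℕ) (x : ℂ) : ℂ :=
  ∑ k ∈ range (n + 1), (qbinom Q n k : ℂ) * x ^ k

section RogersSzego

variable {Q : ℝ} (x : ℂ)

lemma rogersSzego_zero : rogersSzego Q 0 x = 1 := by
  simp [rogersSzego, qbinom, qPoch]

lemma rogersSzego_one (h0 : 0 ≤ Q) (h1 : Q < 1) : rogersSzego Q 1 x = 1 + x := by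
  simp [rogersSzego, sum_range_succ, qbinom_zero_right h0 h1, qbinom_self h0 h1]

lemma rogersSzego_add_two (h0 : 0 ≤ Q) (h1 : Q < 1) (n : ℕ) :
    rogersSzego Q (n + 2) x + (1 - (Q : ℂ) ^ (n + 1)) * x * rogersSzego Q n x =
      (1 + x) * rogersSzego Q (n + 1) x := by
  have pascal : ∑ k ∈ range (n + 1), (qbinom Q (n + 2) (k + 1) : ℂ) * x ^ (k + 1) =
      ∑ k ∈ range (n + 1), ((qbinom Q (n + 1) (k + 1) : ℂ) * x ^ (k + 1) +
        (qbinom Q (n + 1) k : ℂ) * x ^ (k + 1) -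
        (1 - (Q : ℂ) ^ (n + 1)) * ((qbinom Q n k : ℂ) * x ^ (k + 1))) :=
    sum_congr rfl fun k hk => by
      rw [qbinom_add_two_succ h0 h1 (mem_range_succ_iff.1 hk)]
      push_cast
      ring
  rw [sum_sub_distrib, sum_add_distrib, ← mul_sum] at pascal
  have top : rogersSzego Q (n + 2) x =
      ∑ k ∈ range (n + 1), (qbinom Q (n + 2) (k + 1) : ℂ) * x ^ (k + 1) + x ^ (n + 2) + 1 := by
    rw [rogersSzego, sum_range_succ', sum_range_succ, qbinom_zero_right h0 h1,
      qbinom_self h0 h1]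
    push_cast
    ring
  have mid : rogersSzego Q (n + 1) x =
      ∑ k ∈ range (n + 1), (qbinom Q (n + 1) (k + 1) : ℂ) * x ^ (k + 1) + 1 := by
    rw [rogersSzego, sum_range_succ', qbinom_zero_right h0 h1]
    push_cast
    ring
  have mid' : x * rogersSzego Q (n + 1) x =
      ∑ k ∈ range (n + 1), (qbinom Q (n + 1) k : ℂ) * x ^ (k + 1) + x ^ (n + 2) := by
    rw [rogersSzego, mul_sum, sum_range_succ, qbinom_self h0 h1]
    push_cast
    exact congrArg₂ _ (sum_congr rfl fun _ _ => by ring) (by ring)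
  have bot : x * rogersSzego Q n x = ∑ k ∈ range (n + 1), (qbinom Q n k : ℂ) * x ^ (k + 1) := by
    rw [rogersSzego, mul_sum]
    exact sum_congr rfl fun _ _ => by ring
  linear_combination top + pascal - mid - mid' + (1 - (Q : ℂ) ^ (n + 1)) * bot

end RogersSzego

lemma cpw_add (q : ℝ) (a b : ℂ) : cpw q (a + b) = cpw q a * cpw q b := by
  rw [cpw, add_mul, Complex.exp_add, cpw, cpw]

lemma cpw_nat_mul (q : ℝ) (n : ℕ) (z : ℂ) : cpw q (n * z) = cpw q z ^ n := by
  rw [cpw, mul_assoc, Complex.exp_nat_mul, cpw]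

lemma cpw_mul_cpw_neg (q : ℝ) (z : ℂ) : cpw q z * cpw q (-z) = 1 := by
  rw [← cpw_add, add_neg_cancel, cpw, zero_mul, Complex.exp_zero]

lemma norm_cpw_s11 {q : ℝ} (hq : 0 < q) (w : ℂ) : ‖cpw q w‖ = q ^ w.re := by
  rw [cpw, Complex.norm_exp, Real.rpow_def_of_pos hq, mul_comm (Real.log q)]
  simp

lemma norm_pow_mul_cpw_le {q : ℝ} (hq0 : 0 < q) (hq1 : q ≤ 1) (z : ℂ) {n k : ℕ} (hk : k ≤ n) :
    ‖(q : ℂ) ^ n * cpw q (z * ((n : ℂ) - 2 * (k : ℂ)))‖ ≤ (q ^ (1 - |z.re|)) ^ n := by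
  have hre : (z * ((n : ℂ) - 2 * (k : ℂ))).re = z.re * ((n : ℝ) - 2 * k) := by
    simp [Complex.mul_re]
  have hnk : |(n : ℝ) - 2 * k| ≤ n := by
    rw [abs_le]
    constructor <;> linarith [(Nat.cast_le (α := ℝ)).2 hk, (k.cast_nonneg : (0 : ℝ) ≤ k)]
  have hexp : (1 - |z.re|) * n ≤ n + z.re * ((n : ℝ) - 2 * k) := by
    have := neg_abs_le (z.re * ((n : ℝ) - 2 * k))
    rw [abs_mul] at this
    nlinarith [abs_nonneg z.re]
  rw [norm_mul, norm_pow, Complex.norm_real, Real.norm_of_nonneg hq0.le, norm_cpw_s11 hq0, hre,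
    ← Real.rpow_natCast, ← Real.rpow_add hq0, ← Real.rpow_mul_natCast hq0.le]
  exact Real.rpow_le_rpow_of_exponent_ge hq0 hq1 hexp

lemma norm_pfun_le {q : ℝ} (hq0 : 0 < q) (hq1 : q < 1) (z : ℂ) :
    ∃ C, ∀ n, ‖pfun q n z‖ ≤ C * (n + 1) * (q ^ (1 - |z.re|)) ^ n := by
  have hQ0 : 0 ≤ q ^ 2 := by positivity
  have hQ1 : q ^ 2 < 1 := by nlinarith
  obtain ⟨P, hP0, hP⟩ := exists_pos_le_qPoch hQ0 hQ1
  refine ⟨(Real.sqrt P)⁻¹ * (P ^ 2)⁻¹, fun n => ?_⟩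
  have hsqrt : Real.sqrt P ≤ Real.sqrt (qPoch (q ^ 2) (q ^ 2) n) := Real.sqrt_le_sqrt (hP n)
  have hterm : ∀ k ∈ range (n + 1),
      ‖(qbinom (q ^ 2) n k : ℂ) * ((q : ℂ) ^ n * cpw q (z * ((n : ℂ) - 2 * (k : ℂ))))‖ ≤
        (P ^ 2)⁻¹ * (q ^ (1 - |z.re|)) ^ n := fun k hk => by
    rw [norm_mul, Complex.norm_real, Real.norm_of_nonneg (qbinom_nonneg_s11 hQ0 hQ1 n k)]
    exact mul_le_mul (qbinom_le hQ0 hQ1 hP0 hP n k)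
      (norm_pow_mul_cpw_le hq0 hq1.le z (mem_range_succ_iff.1 hk)) (norm_nonneg _)
      (by positivity)
  have hpfun : pfun q n z = ((Real.sqrt (qPoch (q ^ 2) (q ^ 2) n))⁻¹ : ℝ) *
      ∑ k ∈ range (n + 1),
        (qbinom (q ^ 2) n k : ℂ) * ((q : ℂ) ^ n * cpw q (z * ((n : ℂ) - 2 * (k : ℂ)))) := by
    rw [pfun, div_eq_inv_mul, Complex.ofReal_mul, mul_assoc, mul_sum]
    push_cast
    exact congrArg _ (sum_congr rfl fun _ _ => by ring)
  calc ‖pfun q n z‖ ≤ (Real.sqrt P)⁻¹ * ((n + 1) * ((P ^ 2)⁻¹ * (q ^ (1 - |z.re|)) ^ n)) := by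
        rw [hpfun, norm_mul, Complex.norm_real, Real.norm_of_nonneg (by positivity)]
        refine mul_le_mul (inv_anti₀ (Real.sqrt_pos.2 hP0) hsqrt) ?_ (norm_nonneg _)
          (by positivity)
        refine (norm_sum_le _ _).trans ((sum_le_sum hterm).trans_eq ?_)
        rw [sum_const, card_range, nsmul_eq_mul]
        push_cast
        ring
    _ = (Real.sqrt P)⁻¹ * (P ^ 2)⁻¹ * (n + 1) * (q ^ (1 - |z.re|)) ^ n := by ring

lemma memℓp_pfun {q : ℝ} (hq0 : 0 < q) (hq1 : q < 1) {z : ℂ} (hz0 : -1 < z.re) (hz1 : z.re < 1) :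
    Memℓp (fun n : ℕ => pfun q n z) 2 := by
  obtain ⟨C, hC⟩ := norm_pfun_le hq0 hq1 z
  set ρ := q ^ (1 - |z.re|)
  have hρ : ‖ρ ^ 2‖ < 1 := by
    have : ρ < 1 := Real.rpow_lt_one hq0.le hq1 (by linarith [abs_lt.2 ⟨hz0, hz1⟩])
    rw [norm_pow, Real.norm_of_nonneg (by positivity)]
    exact pow_lt_one₀ (by positivity) this two_ne_zero
  have hgeom k := summable_pow_mul_geometric_of_norm_lt_one k hρ
  have hbound : Summable fun n : ℕ => (C * (n + 1) * ρ ^ n) ^ 2 :=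
    (((hgeom 2).add ((hgeom 1).mul_left 2)).add (hgeom 0)).mul_left (C ^ 2) |>.congr
      fun n => by ring
  refine memℓp_gen (hbound.of_nonneg_of_le (fun n => by positivity) fun n => ?_)
  rw [ENNReal.toReal_ofNat, Real.rpow_two]
  exact pow_le_pow_left₀ (norm_nonneg _) (hC n) 2

lemma pfun_eq_rogersSzego (q : ℝ) (n : ℕ) (z : ℂ) :
    pfun q n z = ((q ^ n / Real.sqrt (qPoch (q ^ 2) (q ^ 2) n) : ℝ) : ℂ) *
      (cpw q z ^ n * rogersSzego (q ^ 2) n (cpw q (-z) ^ 2)) := by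
  rw [pfun, rogersSzego]
  congr 1
  rw [mul_sum]
  refine sum_congr rfl fun k _ => ?_
  rw [show z * ((n : ℂ) - 2 * (k : ℂ)) = n * z + ((2 * k : ℕ) : ℂ) * -z by push_cast; ring,
    cpw_add, cpw_nat_mul, cpw_nat_mul, pow_mul]
  ring

lemma sqrt_mul_normalizer_succ {q : ℝ} (hq0 : 0 < q) (hq1 : q < 1) (n : ℕ) :
    Real.sqrt (1 - q ^ (2 * (n + 1))) *
        (q ^ (n + 1) / Real.sqrt (qPoch (q ^ 2) (q ^ 2) (n + 1))) =
      q * (q ^ n / Real.sqrt (qPoch (q ^ 2) (q ^ 2) n)) := by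
  have hQ0 : 0 ≤ q ^ 2 := by positivity
  have hQ1 : q ^ 2 < 1 := by nlinarith
  have hs : 0 < 1 - q ^ (2 * (n + 1)) := by
    rw [pow_mul, pow_succ']
    exact sub_pos.2 (mul_pow_lt_one hQ0 hQ1 n)
  have hD := qPoch_pos hQ0 hQ1 n
  rw [qPoch_succ, ← pow_succ', ← pow_mul, Real.sqrt_mul hD.le]
  have := Real.sqrt_pos.2 hs
  have := Real.sqrt_pos.2 hD
  field_simp
  ring

lemma pfun_recurrence_zero {q : ℝ} (hq0 : 0 < q) (hq1 : q < 1) (z : ℂ) :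
    (q⁻¹ : ℂ) * ((Real.sqrt (1 - q ^ 2) : ℂ) * pfun q 1 z) =
      (cpw q z + cpw q (-z)) * pfun q 0 z := by
  have hnorm := congrArg (fun t : ℝ => (t : ℂ)) (sqrt_mul_normalizer_succ hq0 hq1 0)
  simp only [zero_add, mul_one, Complex.ofReal_mul] at hnorm
  have hq : (q : ℂ)⁻¹ * q = 1 := inv_mul_cancel₀ (Complex.ofReal_ne_zero.2 hq0.ne')
  have hinv := cpw_mul_cpw_neg q z
  rw [pfun_eq_rogersSzego, pfun_eq_rogersSzego, rogersSzego_one _ (by positivity) (by nlinarith),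
    rogersSzego_zero]
  set w := cpw q z
  set v := cpw q (-z)
  set c₀ : ℂ := ((q ^ 0 / Real.sqrt (qPoch (q ^ 2) (q ^ 2) 0) : ℝ) : ℂ)
  linear_combination (q⁻¹ * w * (1 + v ^ 2)) * hnorm + c₀ * w * (1 + v ^ 2) * hq + c₀ * v * hinv

lemma pfun_recurrence_succ {q : ℝ} (hq0 : 0 < q) (hq1 : q < 1) (z : ℂ) (m : ℕ) :
    (q⁻¹ : ℂ) * ((Real.sqrt (1 - q ^ (2 * (m + 1 + 1))) : ℂ) * pfun q (m + 1 + 1) z) +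
        q * ((Real.sqrt (1 - q ^ (2 * (m + 1))) : ℂ) * pfun q m z) =
      (cpw q z + cpw q (-z)) * pfun q (m + 1) z := by
  have hQ0 : 0 ≤ q ^ 2 := by positivity
  have hQ1 : q ^ 2 < 1 := by nlinarith
  have hnorm₁ := congrArg (fun t : ℝ => (t : ℂ)) (sqrt_mul_normalizer_succ hq0 hq1 (m + 1))
  have hnorm₀ := congrArg (fun t : ℝ => (t : ℂ)) (sqrt_mul_normalizer_succ hq0 hq1 m)
  have hsq : (Real.sqrt (1 - q ^ (2 * (m + 1))) : ℂ) ^ 2 = 1 - (q : ℂ) ^ (2 * (m + 1)) := by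
    rw [← Complex.ofReal_pow, Real.sq_sqrt]
    · push_cast
      ring
    · rw [pow_mul, pow_succ']
      exact (sub_pos.2 (mul_pow_lt_one hQ0 hQ1 m)).le
  simp only [Complex.ofReal_mul] at hnorm₀ hnorm₁
  have hq : (q : ℂ)⁻¹ * q = 1 := inv_mul_cancel₀ (Complex.ofReal_ne_zero.2 hq0.ne')
  have hinv := cpw_mul_cpw_neg q z
  have hRS := rogersSzego_add_two (cpw q (-z) ^ 2) hQ0 hQ1 m
  push_cast at hRS
  rw [pfun_eq_rogersSzego, pfun_eq_rogersSzego, pfun_eq_rogersSzego]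
  set w := cpw q z
  set v := cpw q (-z)
  set s₀ : ℂ := (Real.sqrt (1 - q ^ (2 * (m + 1))) : ℂ)
  set c₁ : ℂ := ((q ^ (m + 1) / Real.sqrt (qPoch (q ^ 2) (q ^ 2) (m + 1)) : ℝ) : ℂ)
  set H₀ := rogersSzego (q ^ 2) m (v ^ 2)
  set H₁ := rogersSzego (q ^ 2) (m + 1) (v ^ 2)
  set H₂ := rogersSzego (q ^ 2) (m + 1 + 1) (v ^ 2)
  linear_combination (q⁻¹ * w ^ (m + 2) * H₂) * hnorm₁ + c₁ * w ^ (m + 2) * H₂ * hq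
    - s₀ * w ^ m * H₀ * hnorm₀ + c₁ * w ^ m * H₀ * hsq + c₁ * w ^ (m + 2) * hRS
    - (1 - (q : ℂ) ^ (2 * (m + 1))) * c₁ * H₀ * w ^ m * (w * v + 1) * hinv
    + c₁ * H₁ * w ^ (m + 1) * v * hinv

section WeightedShift

variable {𝕜 : Type*} [RCLike 𝕜] {a : lp (fun _ : ℕ => 𝕜) 2 →L[𝕜] lp (fun _ : ℕ => 𝕜) 2}
  {b : ℕ → 𝕜}

lemma adjoint_apply_eq_inner_single (η : lp (fun _ : ℕ => 𝕜) 2) (m : ℕ) :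
    (ContinuousLinearMap.adjoint a η : ∀ _ : ℕ, 𝕜) m = inner 𝕜 (a (lp.single 2 m 1)) η := by
  rw [← ContinuousLinearMap.adjoint_inner_right, lp.inner_single_left]
  simp

lemma weightedShift_adjoint_apply_zero (ha : ∀ ξ : lp (fun _ : ℕ => 𝕜) 2, ∀ n,
    (a ξ : ∀ _ : ℕ, 𝕜) n = b n * ξ (n + 1)) (η : lp (fun _ : ℕ => 𝕜) 2) :
    (ContinuousLinearMap.adjoint a η : ∀ _ : ℕ, 𝕜) 0 = 0 := by
  rw [adjoint_apply_eq_inner_single, lp.inner_eq_tsum]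
  refine (tsum_congr fun i => ?_).trans tsum_zero
  rw [ha, lp.single_apply_ne _ _ _ i.succ_ne_zero]
  simp

lemma weightedShift_adjoint_apply_succ (ha : ∀ ξ : lp (fun _ : ℕ => 𝕜) 2, ∀ n,
    (a ξ : ∀ _ : ℕ, 𝕜) n = b n * ξ (n + 1)) (η : lp (fun _ : ℕ => 𝕜) 2) (n : ℕ) :
    (ContinuousLinearMap.adjoint a η : ∀ _ : ℕ, 𝕜) (n + 1) = starRingEnd 𝕜 (b n) * η n := by
  rw [adjoint_apply_eq_inner_single, lp.inner_eq_tsum, tsum_eq_single n fun i hi => ?_]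
  · rw [ha, lp.single_apply_self]
    simp [mul_comm]
  · rw [ha, lp.single_apply_ne _ _ _ (by omega : i + 1 ≠ n + 1)]
    simp

end WeightedShift

theorem stmt11 (q : ℝ) (hq0 : 0 < q) (hq1 : q < 1) (z : ℂ)
    (hz0 : -1 < z.re) (hz1 : z.re < 1) :
    Memℓp (fun n : ℕ => pfun q n z) 2 ∧
    ∀ a : lp (fun _ : ℕ => ℂ) 2 →L[ℂ] lp (fun _ : ℕ => ℂ) 2,
      (∀ ξ : lp (fun _ : ℕ => ℂ) 2, ∀ n : ℕ,
        (a ξ : ∀ _ : ℕ, ℂ) n = (Real.sqrt (1 - q ^ (2 * (n + 1))) : ℂ) * ξ (n + 1)) →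
      ∀ η : lp (fun _ : ℕ => ℂ) 2, (∀ n : ℕ, (η : ∀ _ : ℕ, ℂ) n = pfun q n z) →
        ((q⁻¹ : ℂ) • a + (q : ℂ) • ContinuousLinearMap.adjoint a) η =
          (cpw q z + cpw q (-z)) • η := by
  refine ⟨memℓp_pfun hq0 hq1 hz0 hz1, fun a ha η hη => lp.ext (funext fun n => ?_)⟩
  simp only [add_apply, smul_apply, lp.coeFn_add, lp.coeFn_smul, Pi.add_apply, Pi.smul_apply, smul_eq_mul, ha η n, hη]
  cases n with
  | zero =>
    rw [weightedShift_adjoint_apply_zero ha, mul_zero, add_zero]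
    simpa using pfun_recurrence_zero hq0 hq1 z
  | succ m =>
    rw [weightedShift_adjoint_apply_succ ha, Complex.conj_ofReal, hη]
    exact pfun_recurrence_succ hq0 hq1 z m
end
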